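/- arXiv:math/0112085 — 5 statements merged into one kernel-verified Lean document; each statement's English description precedes it below -/
import Mathlib

section
/- Let (n_k) be a strictly increasing sequence of positive integers and a > 0. If there exists a sequence of positive reals (r_k) such that for every δ > 0 the intervals of radius δ/n_k centered at the points (ln a)/n_k − (ln r_k)/n_k cover (0, ∞), then the series ∑ 1/n_k diverges. -/
/-! If `∑ 1/n_k` converged, the intervals of radius `δ/n_k` would have total length
`2δ ∑ 1/n_k`, which tends to `0` with `δ`; they could not cover `(0, ∞)`, which has
positive measure. -/

open MeasureTheory Metric Filter Topology

theorem volume_iUnion_ball_le_ofReal_tsum (c ρ : ℕ → ℝ) (hρ : ∀ k, 0 ≤ ρ k)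
    (hsum : Summable ρ) :
    volume (⋃ k, ball (c k) (ρ k)) ≤ ENNReal.ofReal (2 * ∑' k, ρ k) :=
  calc volume (⋃ k, ball (c k) (ρ k))
      ≤ ∑' k, volume (ball (c k) (ρ k)) := measure_iUnion_le _
    _ = ∑' k, ENNReal.ofReal (2 * ρ k) := by simp only [Real.volume_ball]
    _ = ENNReal.ofReal (2 * ∑' k, ρ k) := by
      rw [← ENNReal.ofReal_tsum_of_nonneg (fun k => by linarith [hρ k]) (hsum.mul_left 2),
        tsum_mul_left]

theorem not_summable_of_forall_subset_iUnion_ball {s : Set ℝ} (hs : volume s ≠ 0)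
    {w : ℕ → ℝ} (hw : ∀ k, 0 ≤ w k) (c : ℝ → ℕ → ℝ)
    (hcover : ∀ δ > 0, s ⊆ ⋃ k, ball (c δ k) (δ * w k)) : ¬ Summable w := by
  intro hsum
  have hle : ∀ δ > 0, volume s ≤ ENNReal.ofReal (2 * ∑' k, δ * w k) := fun δ hδ =>
    (measure_mono (hcover δ hδ)).trans <| volume_iUnion_ball_le_ofReal_tsum _ _
      (fun k => mul_nonneg hδ.le (hw k)) (hsum.mul_left δ)
  have hlim : Tendsto (fun δ => ENNReal.ofReal (2 * ∑' k, δ * w k)) (𝓝[>] 0) (𝓝 0) := by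
    simp only [tsum_mul_left]
    rw [← ENNReal.ofReal_zero]
    refine ENNReal.tendsto_ofReal (tendsto_nhdsWithin_of_tendsto_nhds ?_)
    exact Continuous.tendsto' (by fun_prop) 0 0 (by simp)
  exact hs (nonpos_iff_eq_zero.1 <| ge_of_tendsto hlim <|
    eventually_nhdsWithin_of_forall fun δ hδ => hle δ hδ)

theorem stmt_1_general (n : ℕ → ℕ)
    (a : ℝ)
    (h : ∃ r : ℕ → ℝ, (∀ k, 0 < r k) ∧
      ∀ s : ℝ, 0 < s → ∀ δ : ℝ, 0 < δ →
        ∃ k, |s - (Real.log a / n k - Real.log (r k) / n k)| < δ / n k) :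
    ¬ Summable (fun k => 1 / (n k : ℝ)) := by
  obtain ⟨r, -, hcov⟩ := h
  refine not_summable_of_forall_subset_iUnion_ball (s := Set.Ioi 0) (by simp)
    (fun k => by positivity) (fun _ k => Real.log a / n k - Real.log (r k) / n k) ?_
  intro δ hδ s hs
  obtain ⟨k, hk⟩ := hcov s hs δ hδ
  exact Set.mem_iUnion.2 ⟨k, by rwa [mem_ball, Real.dist_eq, ← div_eq_mul_one_div]⟩

theorem stmt_1 (n : ℕ → ℕ) (hmono : StrictMono n) (hpos : ∀ k, 0 < n k)
    (a : ℝ) (ha : 0 < a)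
    (h : ∃ r : ℕ → ℝ, (∀ k, 0 < r k) ∧
      ∀ s : ℝ, 0 < s → ∀ δ : ℝ, 0 < δ →
        ∃ k, |s - (Real.log a / n k - Real.log (r k) / n k)| < δ / n k) :
    ¬ Summable (fun k => 1 / (n k : ℝ)) :=
  stmt_1_general n a h
end

section
/- Define j : {n ∈ ℕ : n ≥ 20} → ℕ by j(k) = k + 1 − ⌊n ln ln n⌋, where n is the unique positive integer with ⌊n ln ln n⌋ ≤ k < ⌊(n+1) ln ln (n+1)⌋. Then j(k) < ⌊ln ln k⌋ + 3 for all k ≥ 20. -/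
/-!
Write `f x = x ln ln x`. Since `ln ln (x+1) - ln ln x ≤ 1 / (x ln x)`, we get
`f (n+1) - f n = ln ln n + (n+1) (ln ln (n+1) - ln ln n) < ln ln n + 1` once `n ln n > n + 1`,
so `j k ≤ ⌊f (n+1)⌋ - ⌊f n⌋ < ln ln n + 2`. Finally `n ≤ f n ≤ k` because `ln ln n ≥ 1` for
`n ≥ 16 > e^e`, hence `ln ln n ≤ ln ln k`.
-/

open Real

theorem log_sixteen_eq : log 16 = 4 * log 2 := by
  rw [show (16 : ℝ) = 2 ^ 4 by norm_num, log_pow]; norm_num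

theorem exp_exp_one_lt_sixteen : exp (exp 1) < 16 := by
  rw [← lt_log_iff_exp_lt (by norm_num), log_sixteen_eq]
  linarith [exp_one_lt_d9, log_two_gt_d9]

theorem log_log_sixteen_lt : log (log 16) < 21 / 16 := by
  have hpos : 0 < log 16 := log_pos (by norm_num)
  rw [log_lt_iff_lt_exp hpos, log_sixteen_eq]
  linarith [log_two_lt_d9, quadratic_le_exp_of_nonneg (show (0 : ℝ) ≤ 21 / 16 by norm_num)]

section LogLog

variable {x : ℝ}

theorem exp_one_le_log (hx : exp (exp 1) ≤ x) : exp 1 ≤ log x :=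
  (le_log_iff_exp_le (exp_pos _ |>.trans_le hx)).mpr hx

theorem one_le_log_log (hx : exp (exp 1) ≤ x) : 1 ≤ log (log x) :=
  (le_log_iff_exp_le (exp_pos 1 |>.trans_le (exp_one_le_log hx))).mpr (exp_one_le_log hx)

theorem log_succ_sub_log_le (hx : 0 < x) : log (x + 1) - log x ≤ 1 / x := by
  rw [← log_div (by linarith) hx.ne']
  calc log ((x + 1) / x) ≤ (x + 1) / x - 1 := log_le_sub_one_of_pos (by positivity)
    _ = 1 / x := by field_simp; ring

theorem log_log_succ_sub_log_log_le (hx : 1 < x) :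
    log (log (x + 1)) - log (log x) ≤ 1 / (x * log x) := by
  have hlog : 0 < log x := log_pos hx
  have hlog_succ : 0 < log (x + 1) := log_pos (by linarith)
  rw [← log_div hlog_succ.ne' hlog.ne']
  calc log (log (x + 1) / log x) ≤ log (x + 1) / log x - 1 :=
        log_le_sub_one_of_pos (by positivity)
    _ = (log (x + 1) - log x) / log x := by field_simp
    _ ≤ 1 / x / log x := by gcongr; exact log_succ_sub_log_le (by linarith)
    _ = 1 / (x * log x) := by rw [div_div]

theorem succ_mul_log_log_sub_lt_one (hx : exp (exp 1) ≤ x) :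
    (x + 1) * (log (log (x + 1)) - log (log x)) < 1 := by
  have he : 2 < exp 1 := by linarith [exp_one_gt_d9]
  have hlog : 2 < log x := he.trans_le (exp_one_le_log hx)
  have hx1 : 1 < x := by linarith [add_one_le_exp (exp 1)]
  have hxlog : 0 < x * log x := by positivity
  calc (x + 1) * (log (log (x + 1)) - log (log x)) ≤ (x + 1) * (1 / (x * log x)) := by
        gcongr; exact log_log_succ_sub_log_log_le hx1
    _ < 1 := by rw [mul_one_div, div_lt_one hxlog]; nlinarith

theorem succ_mul_log_log_succ_sub_mul_log_log_lt (hx : exp (exp 1) ≤ x) :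
    (x + 1) * log (log (x + 1)) - x * log (log x) < log (log x) + 1 := by
  linarith [succ_mul_log_log_sub_lt_one hx]

end LogLog

theorem Nat.exists_le_lt_succ_of_le_of_lt (g : ℕ → ℕ) {a b k : ℕ} (hab : a ≤ b)
    (ha : g a ≤ k) (hb : k < g b) : ∃ n, a ≤ n ∧ n < b ∧ g n ≤ k ∧ k < g (n + 1) := by
  induction b with
  | zero => exact absurd (Nat.le_zero.mp hab ▸ ha) hb.not_ge
  | succ b ih =>
    have hab' : a ≤ b := by
      rcases hab.lt_or_eq with h | rfl
      · omega
      · exact absurd ha hb.not_ge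
    by_cases hgb : g b ≤ k
    · exact ⟨b, hab', b.lt_succ_self, hgb, hb⟩
    · obtain ⟨n, han, hnb, hn⟩ := ih hab' (not_le.mp hgb)
      exact ⟨n, han, hnb.trans b.lt_succ_self, hn⟩

section FloorMulLogLog

variable {n k : ℕ}

theorem exp_exp_one_le_natCast (hn : 16 ≤ n) : exp (exp 1) ≤ n :=
  exp_exp_one_lt_sixteen.le.trans (by exact_mod_cast hn)

theorem self_le_floor_mul_log_log (hn : 16 ≤ n) : n ≤ ⌊(n : ℝ) * log (log n)⌋₊ :=
  Nat.le_floor (le_mul_of_one_le_right n.cast_nonneg (one_le_log_log (exp_exp_one_le_natCast hn)))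

theorem floor_sixteen_mul_log_log_le : ⌊((16 : ℕ) : ℝ) * log (log (16 : ℕ))⌋₊ ≤ 20 := by
  have h := log_log_sixteen_lt
  refine Nat.le_of_lt_succ ((Nat.floor_lt ?_).mpr ?_)
  · have := one_le_log_log exp_exp_one_lt_sixteen.le
    push_cast; positivity
  · push_cast; linarith

theorem exists_floor_mul_log_log_le_lt (hk : 20 ≤ k) :
    ∃ n : ℕ, 16 ≤ n ∧ n ≤ k ∧ ⌊(n : ℝ) * log (log n)⌋₊ ≤ k ∧
      k < ⌊((n : ℝ) + 1) * log (log ((n : ℝ) + 1))⌋₊ := by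
  obtain ⟨n, hn16, hnk, hlo, hhi⟩ :=
    Nat.exists_le_lt_succ_of_le_of_lt (fun m : ℕ => ⌊(m : ℝ) * log (log m)⌋₊)
      (a := 16) (b := k + 1) (by omega) (floor_sixteen_mul_log_log_le.trans hk)
      (k.lt_succ_self.trans_le (self_le_floor_mul_log_log (by omega)))
  exact ⟨n, hn16, Nat.le_of_lt_succ hnk, hlo, by exact_mod_cast hhi⟩

theorem succ_sub_floor_mul_log_log_lt (hn : 16 ≤ n)
    (hk : k < ⌊((n : ℝ) + 1) * log (log ((n : ℝ) + 1))⌋₊) :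
    ((k + 1 - ⌊(n : ℝ) * log (log n)⌋₊ : ℕ) : ℝ) < log (log n) + 2 := by
  have hx : exp (exp 1) ≤ n := exp_exp_one_le_natCast hn
  have hL : 1 ≤ log (log n) := one_le_log_log hx
  rcases le_or_gt (k + 1) ⌊(n : ℝ) * log (log n)⌋₊ with hle | hlt
  · rw [Nat.sub_eq_zero_of_le hle, Nat.cast_zero]; linarith
  · have hk' : ((k + 1 : ℕ) : ℝ) ≤ ((n : ℝ) + 1) * log (log ((n : ℝ) + 1)) :=
      (Nat.cast_le.mpr hk).trans (Nat.floor_le (by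
        have := one_le_log_log (hx.trans (by linarith) : exp (exp 1) ≤ (n : ℝ) + 1)
        positivity))
    rw [Nat.cast_sub hlt.le]
    linarith [Nat.sub_one_lt_floor ((n : ℝ) * log (log n)),
      succ_mul_log_log_succ_sub_mul_log_log_lt hx]

end FloorMulLogLog

theorem stmt_4 (j : ℕ → ℕ)
    (hj : ∀ k, 20 ≤ k → ∀ n : ℕ,
      Nat.floor ((n : ℝ) * Real.log (Real.log n)) ≤ k →
      k < Nat.floor (((n : ℝ) + 1) * Real.log (Real.log ((n : ℝ) + 1))) →
      j k = k + 1 - Nat.floor ((n : ℝ) * Real.log (Real.log n))) :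
    ∀ k, 20 ≤ k → j k < Nat.floor (Real.log (Real.log k)) + 3 := by
  intro k hk
  obtain ⟨n, hn16, hnk, hlo, hhi⟩ := exists_floor_mul_log_log_le_lt hk
  have hlog_log : log (log n) ≤ log (log k) := by
    have hn : (16 : ℝ) ≤ n := by exact_mod_cast hn16
    exact log_le_log (log_pos (by linarith)) (log_le_log (by linarith) (by exact_mod_cast hnk))
  have hjk : (j k : ℝ) < log (log k) + 2 := by
    rw [hj k hk n hlo hhi]
    linarith [succ_sub_floor_mul_log_log_lt hn16 hhi]
  have hfloor := Nat.lt_floor_add_one (log (log (k : ℝ)))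
  exact_mod_cast (by linarith : (j k : ℝ) < ⌊log (log (k : ℝ))⌋₊ + 3)
end

section
/- Let (M_k)_{k≥20} be a strictly increasing sequence of positive integers with M_{k+1} − M_k → ∞, and let (r_k)_{k≥20} be a strictly decreasing sequence of positive reals with r_k → 0. Let (w_k)_{k≥20} be unit vectors in ℓ² such that w_k is supported on coordinates 0,…,M_{k+1}−M_k−1. Set d_k = √(r_k² − r_{k+1}²) and f = ∑_{k≥20} d_k S^{M_k} w_k, where S is the forward shift. Then f ∈ ℓ² and ‖B^{M_k} f‖ = r_k for all k ≥ 20. -/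
/-!
From `B S = 1`, the operator `B ^ M k` kills the blocks `S ^ M j w j` with `j < k` (since `w j`
lives below `M (j + 1) - M j ≤ M k - M j`) and sends those with `j ≥ k` to `S ^ (M j - M k) w j`.
The latter sit in the disjoint windows `[M j - M k, M (j + 1) - M k)`, so they form an orthonormal
family and `‖B ^ M k f‖² = ∑_{j ≥ k} d j ² = r k ²`, the sum telescoping because `r j → 0`.
-/

open Filter Topology

local notation "ℓ²[" 𝕜 "]" => lp (fun _ : ℕ => 𝕜) 2

theorem lp.inner_eq_zero_of_disjoint {𝕜 ι : Type*} [RCLike 𝕜] {G : ι → Type*}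
    [∀ i, NormedAddCommGroup (G i)] [∀ i, InnerProductSpace 𝕜 (G i)] {f g : lp G 2}
    (h : ∀ i, f i = 0 ∨ g i = 0) : inner 𝕜 f g = 0 := by
  rw [lp.inner_eq_tsum, tsum_congr fun i => ?_, tsum_zero]
  rcases h i with h | h <;> simp [h]

section Orthonormal

variable {𝕜 E ι : Type*} [RCLike 𝕜] [NormedAddCommGroup E] [InnerProductSpace 𝕜 E] {v : ι → E}

theorem Orthonormal.hasSum_norm_sq (hv : Orthonormal 𝕜 v) {c : ι → 𝕜} {x : E}
    (hx : HasSum (fun i => c i • v i) x) : HasSum (fun i => ‖c i‖ ^ 2) (‖x‖ ^ 2) := by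
  refine ((hx.norm).pow 2).congr fun s => ?_
  simpa [LinearIsometry.toSpanSingleton_apply] using hv.orthogonalFamily.norm_sum c s

theorem Orthonormal.summable_smul_iff [CompleteSpace E] (hv : Orthonormal 𝕜 v) {c : ι → 𝕜} :
    Summable (fun i => c i • v i) ↔ Summable (fun i => ‖c i‖ ^ 2) := by
  simpa [LinearIsometry.toSpanSingleton_apply] using
    hv.orthogonalFamily.summable_iff_norm_sq_summable c

end Orthonormal

theorem hasSum_sub_succ_of_antitone {a : ℕ → ℝ} (ha : Antitone a) {l : ℝ}
    (h : Tendsto a atTop (𝓝 l)) : HasSum (fun n => a n - a (n + 1)) (a 0 - l) := by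
  rw [hasSum_iff_tendsto_nat_of_nonneg fun n => sub_nonneg.2 (ha n.le_succ)]
  simp_rw [Finset.sum_range_sub']
  exact tendsto_const_nhds.sub h

theorem hasSum_sqrt_sq_sub_sq {r : ℕ → ℝ} (hr : Antitone r) (hr_nonneg : ∀ n, 0 ≤ r n)
    (h : Tendsto r atTop (𝓝 0)) :
    HasSum (fun n => √(r n ^ 2 - r (n + 1) ^ 2) ^ 2) (r 0 ^ 2) := by
  have hstep : ∀ n, r (n + 1) ^ 2 ≤ r n ^ 2 := fun n =>
    pow_le_pow_left₀ (hr_nonneg _) (hr n.le_succ) 2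
  convert hasSum_sub_succ_of_antitone (antitone_nat_of_succ_le hstep) (by simpa using h.pow 2)
    using 1
  · exact funext fun n => Real.sq_sqrt (sub_nonneg.2 (hstep n))
  · simp

section Shifts

variable {𝕜 : Type*} [RCLike 𝕜]

def IsForwardShift (S : ℓ²[𝕜] →L[𝕜] ℓ²[𝕜]) : Prop :=
  ∀ g : ℓ²[𝕜], (S g : ℕ → 𝕜) 0 = 0 ∧ ∀ n : ℕ, (S g : ℕ → 𝕜) (n + 1) = g n

def IsBackwardShift (B : ℓ²[𝕜] →L[𝕜] ℓ²[𝕜]) : Prop :=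
  ∀ (g : ℓ²[𝕜]) (n : ℕ), (B g : ℕ → 𝕜) n = g (n + 1)

variable {S B : ℓ²[𝕜] →L[𝕜] ℓ²[𝕜]}

namespace IsForwardShift

theorem pow_apply (hS : IsForwardShift S) (m : ℕ) (g : ℓ²[𝕜]) (n : ℕ) :
    ((S ^ m) g : ℕ → 𝕜) n = if n < m then 0 else g (n - m) := by
  induction m generalizing g n with
  | zero => simp
  | succ m ih =>
    rw [pow_succ', mul_apply_eq_comp]
    rcases n with _ | n
    · simp [(hS _).1]
    · simp only [(hS _).2, ih, Nat.add_lt_add_iff_right, Nat.add_sub_add_right]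

theorem pow_apply_eq_zero (hS : IsForwardShift S) {m L : ℕ} {g : ℓ²[𝕜]}
    (hg : ∀ i, L ≤ i → g i = 0) {n : ℕ} (hn : n < m ∨ m + L ≤ n) :
    ((S ^ m) g : ℕ → 𝕜) n = 0 := by
  rw [hS.pow_apply]
  split_ifs with h
  · rfl
  · exact hg _ (by omega)

theorem norm_map (hS : IsForwardShift S) (g : ℓ²[𝕜]) : ‖S g‖ = ‖g‖ := by
  have h := (hasSum_nat_add_iff' 1).mpr (lp.hasSum_inner (𝕜 := 𝕜) (S g) (S g))
  simp only [(hS g).2, Finset.range_one, Finset.sum_singleton, (hS g).1, inner_zero_left,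
    sub_zero] at h
  rw [norm_eq_sqrt_re_inner (𝕜 := 𝕜), h.unique (lp.hasSum_inner g g), ← norm_eq_sqrt_re_inner]

theorem norm_pow_apply (hS : IsForwardShift S) (m : ℕ) (g : ℓ²[𝕜]) : ‖(S ^ m) g‖ = ‖g‖ := by
  induction m with
  | zero => simp
  | succ m ih => rw [pow_succ', mul_apply_eq_comp, hS.norm_map, ih]

theorem orthonormal_pow_apply (hS : IsForwardShift S) {N : ℕ → ℕ} (hN : Monotone N)
    {v : ℕ → ℓ²[𝕜]} (hv : ∀ j, ‖v j‖ = 1) (hsupp : ∀ j i, N (j + 1) - N j ≤ i → v j i = 0) :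
    Orthonormal 𝕜 (fun j => (S ^ N j) (v j)) := by
  have hdisj : ∀ i j, i < j → ∀ n,
      ((S ^ N i) (v i) : ℕ → 𝕜) n = 0 ∨ ((S ^ N j) (v j) : ℕ → 𝕜) n = 0 := by
    intro i j hij n
    have hNi := hN (Nat.le_add_right i 1)
    have hNij := hN (show i + 1 ≤ j from hij)
    by_cases hn : n < N (i + 1)
    · exact Or.inr (hS.pow_apply_eq_zero (hsupp j) (Or.inl (by omega)))
    · exact Or.inl (hS.pow_apply_eq_zero (hsupp i) (Or.inr (by omega)))
  refine ⟨fun j => by rw [hS.norm_pow_apply, hv], fun {i j} hij => ?_⟩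
  rcases hij.lt_or_gt with h | h
  · exact lp.inner_eq_zero_of_disjoint (hdisj i j h)
  · exact lp.inner_eq_zero_of_disjoint fun n => (hdisj j i h n).symm

end IsForwardShift

namespace IsBackwardShift

theorem pow_apply (hB : IsBackwardShift B) (m : ℕ) (g : ℓ²[𝕜]) (n : ℕ) :
    ((B ^ m) g : ℕ → 𝕜) n = g (n + m) := by
  induction m generalizing n with
  | zero => simp
  | succ m ih => rw [pow_succ', mul_apply_eq_comp, hB, ih, Nat.add_right_comm]; rfl

theorem pow_apply_eq_zero (hB : IsBackwardShift B) {m : ℕ} {g : ℓ²[𝕜]}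
    (hg : ∀ i, m ≤ i → g i = 0) : (B ^ m) g = 0 :=
  lp.ext <| funext fun n => by rw [hB.pow_apply, hg _ (by omega)]; rfl

theorem mul_eq_one (hB : IsBackwardShift B) (hS : IsForwardShift S) : B * S = 1 := by
  ext g n
  rw [mul_apply_eq_comp, hB, (hS g).2]
  rfl

theorem pow_mul_pow_of_le (hB : IsBackwardShift B) (hS : IsForwardShift S) {m n : ℕ}
    (h : m ≤ n) : B ^ m * S ^ n = S ^ (n - m) := by
  obtain ⟨k, rfl⟩ := Nat.exists_eq_add_of_le h
  rw [pow_add, ← mul_assoc, pow_mul_pow_eq_one m (hB.mul_eq_one hS), one_mul,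
    Nat.add_sub_cancel_left]

theorem pow_mul_pow_of_ge (hB : IsBackwardShift B) (hS : IsForwardShift S) {m n : ℕ}
    (h : n ≤ m) : B ^ m * S ^ n = B ^ (m - n) := by
  obtain ⟨k, rfl⟩ := Nat.exists_eq_add_of_le h
  rw [add_comm, pow_add, mul_assoc, pow_mul_pow_eq_one n (hB.mul_eq_one hS), mul_one,
    Nat.add_sub_cancel]

theorem hasSum_norm_sq_pow_apply (hB : IsBackwardShift B) (hS : IsForwardShift S)
    {N : ℕ → ℕ} (hN : Monotone N) {v : ℕ → ℓ²[𝕜]} (hv : ∀ j, ‖v j‖ = 1)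
    (hsupp : ∀ j i, N (j + 1) - N j ≤ i → v j i = 0) {c : ℕ → 𝕜} {f : ℓ²[𝕜]}
    (hf : HasSum (fun j => c j • (S ^ N j) (v j)) f) (k : ℕ) :
    HasSum (fun j => ‖c (j + k)‖ ^ 2) (‖(B ^ N k) f‖ ^ 2) := by
  have hlow : ∀ j < k, (B ^ N k) ((S ^ N j) (v j)) = 0 := fun j hj => by
    have hNj := hN (show j + 1 ≤ k from hj)
    rw [← mul_apply_eq_comp, hB.pow_mul_pow_of_ge hS (hN hj.le)]
    exact hB.pow_apply_eq_zero fun i hi => hsupp j i (by omega)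
  have hhigh : ∀ j, (B ^ N k) ((S ^ N (j + k)) (v (j + k))) =
      (S ^ (N (j + k) - N k)) (v (j + k)) := fun j => by
    rw [← mul_apply_eq_comp, hB.pow_mul_pow_of_le hS (hN (Nat.le_add_left k j))]
  have hBf := (hasSum_nat_add_iff' k).mpr (by simpa only [map_smul] using (B ^ N k).hasSum hf)
  rw [Finset.sum_eq_zero fun j hj => by rw [hlow j (Finset.mem_range.mp hj), smul_zero],
    sub_zero] at hBf
  simp only [hhigh] at hBf
  refine (hS.orthonormal_pow_apply (fun i j hij => Nat.sub_le_sub_right (hN (by omega)) _)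
    (fun j => hv _) (fun j i hi => hsupp (j + k) i ?_)).hasSum_norm_sq hBf
  have := hN (Nat.le_add_left k j)
  have := hN (Nat.le_add_right (j + k) 1)
  rw [Nat.add_right_comm] at hi
  omega

end IsBackwardShift

end Shifts

theorem stmt_7_general
    (B S : lp (fun _ : ℕ => ℂ) 2 →L[ℂ] lp (fun _ : ℕ => ℂ) 2)
    (hB : ∀ (g : lp (fun _ : ℕ => ℂ) 2) (n : ℕ), (B g : ℕ → ℂ) n = g (n + 1))
    (hS : ∀ g : lp (fun _ : ℕ => ℂ) 2,
      (S g : ℕ → ℂ) 0 = 0 ∧ ∀ n : ℕ, (S g : ℕ → ℂ) (n + 1) = g n)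
    (M : ℕ → ℕ)
    (hMmono : ∀ k, 20 ≤ k → M k < M (k + 1))
    (r : ℕ → ℝ) (hrpos : ∀ k, 20 ≤ k → 0 < r k)
    (hrmono : ∀ k, 20 ≤ k → r (k + 1) < r k)
    (hr0 : Filter.Tendsto r Filter.atTop (nhds 0))
    (w : ℕ → lp (fun _ : ℕ => ℂ) 2) (hwnorm : ∀ k, 20 ≤ k → ‖w k‖ = 1)
    (hwsupp : ∀ k, 20 ≤ k → ∀ i : ℕ, M (k + 1) - M k ≤ i → (w k : ℕ → ℂ) i = 0)
    (d : ℕ → ℝ) (hd : ∀ k, d k = Real.sqrt (r k ^ 2 - r (k + 1) ^ 2)) :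
    ∃ f : lp (fun _ : ℕ => ℂ) 2,
      HasSum (fun k : ℕ => (d (k + 20) : ℂ) • ((S ^ M (k + 20)) (w (k + 20)))) f ∧
      ∀ k, 20 ≤ k → ‖(B ^ M k) f‖ = r k := by
  have hN : Monotone fun j => M (j + 20) :=
    monotone_nat_of_le_succ fun j => (hMmono (j + 20) (by omega)).le
  have hsupp : ∀ j i, M (j + 1 + 20) - M (j + 20) ≤ i → (w (j + 20) : ℕ → ℂ) i = 0 :=
    fun j i hi => hwsupp (j + 20) (by omega) i (by rwa [Nat.add_right_comm] at hi)
  have hv : ∀ j, ‖w (j + 20)‖ = 1 := fun j => hwnorm _ (by omega)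
  have htail : ∀ k, 20 ≤ k → HasSum (fun j => ‖(d (j + k) : ℂ)‖ ^ 2) (r k ^ 2) := fun k hk => by
    have := hasSum_sqrt_sq_sub_sq (r := fun j => r (j + k))
      (antitone_nat_of_succ_le fun j => by
        simpa only [Nat.add_right_comm] using (hrmono (j + k) (by omega)).le)
      (fun j => (hrpos _ (by omega)).le) (hr0.comp (tendsto_add_atTop_nat k))
    simpa [hd, Nat.add_right_comm] using this
  obtain ⟨f, hf⟩ := ((IsForwardShift.orthonormal_pow_apply hS hN hv hsupp).summable_smul_iff).mpr
    (htail 20 le_rfl).summable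
  refine ⟨f, hf, fun k hk => ?_⟩
  obtain ⟨m, rfl⟩ := Nat.exists_eq_add_of_le' hk
  have hnorm := IsBackwardShift.hasSum_norm_sq_pow_apply hB hS hN hv hsupp hf m
  simp only [Nat.add_assoc] at hnorm
  rw [← sq_eq_sq₀ (norm_nonneg _) (hrpos _ hk).le]
  exact hnorm.unique (htail _ hk)

theorem stmt_7
    (B S : lp (fun _ : ℕ => ℂ) 2 →L[ℂ] lp (fun _ : ℕ => ℂ) 2)
    (hB : ∀ (g : lp (fun _ : ℕ => ℂ) 2) (n : ℕ), (B g : ℕ → ℂ) n = g (n + 1))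
    (hS : ∀ g : lp (fun _ : ℕ => ℂ) 2,
      (S g : ℕ → ℂ) 0 = 0 ∧ ∀ n : ℕ, (S g : ℕ → ℂ) (n + 1) = g n)
    (M : ℕ → ℕ) (hMpos : ∀ k, 20 ≤ k → 0 < M k)
    (hMmono : ∀ k, 20 ≤ k → M k < M (k + 1))
    (hMgap : Filter.Tendsto (fun k => (M (k + 1) : ℝ) - M k) Filter.atTop Filter.atTop)
    (r : ℕ → ℝ) (hrpos : ∀ k, 20 ≤ k → 0 < r k)
    (hrmono : ∀ k, 20 ≤ k → r (k + 1) < r k)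
    (hr0 : Filter.Tendsto r Filter.atTop (nhds 0))
    (w : ℕ → lp (fun _ : ℕ => ℂ) 2) (hwnorm : ∀ k, 20 ≤ k → ‖w k‖ = 1)
    (hwsupp : ∀ k, 20 ≤ k → ∀ i : ℕ, M (k + 1) - M k ≤ i → (w k : ℕ → ℂ) i = 0)
    (d : ℕ → ℝ) (hd : ∀ k, d k = Real.sqrt (r k ^ 2 - r (k + 1) ^ 2)) :
    ∃ f : lp (fun _ : ℕ => ℂ) 2,
      HasSum (fun k : ℕ => (d (k + 20) : ℂ) • ((S ^ M (k + 20)) (w (k + 20)))) f ∧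
      ∀ k, 20 ≤ k → ‖(B ^ M k) f‖ = r k :=
  stmt_7_general B S hB hS M hMmono r hrpos hrmono hr0 w hwnorm hwsupp d hd
end

section
/- (Rolewicz) For every complex number z with |z| > 1, the operator zB on ℓ² is hypercyclic, i.e., there exists f ∈ ℓ² whose orbit under zB is dense. -/
/-!
Birkhoff's transitivity theorem reduces the claim to showing that every nonempty set `U` has a
dense union of preimages under the iterates of `T = z • B`. The forward shift `S` scaled by `z⁻¹`
is a right inverse of `T` with `‖S^[n] y‖ = ‖z‖⁻ⁿ ‖y‖ → 0`, while `T^[n]` kills a finitely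
supported `u` once `n` exceeds its support; hence `u + S^[n] y` tends to `u` and is mapped to
`y ∈ U` by `T^[n]` for large `n`. Finitely supported sequences are dense in `ℓ²`, which is also
separable and complete, so Baire's theorem applies.
-/

open Filter Set Topology TopologicalSpace

theorem exists_dense_orbit_of_dense_iUnion_preimage {X : Type*} [TopologicalSpace X]
    [BaireSpace X] [SecondCountableTopology X] [Nonempty X] {f : X → X} (hf : Continuous f)
    (h : ∀ U : Set X, IsOpen U → U.Nonempty → Dense (⋃ n, f^[n] ⁻¹' U)) :
    ∃ x, Dense (range fun n => f^[n] x) := by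
  have hb := isBasis_countableBasis X
  have hG : Dense (⋂ U ∈ countableBasis X, ⋃ n, f^[n] ⁻¹' U) :=
    dense_biInter_of_isOpen
      (fun U hU => isOpen_iUnion fun n => (hb.isOpen hU).preimage (hf.iterate n))
      (countable_countableBasis X)
      (fun U hU => h U (hb.isOpen hU) (nonempty_of_mem_countableBasis hU))
  obtain ⟨x, hx⟩ := hG.nonempty
  refine ⟨x, hb.dense_iff.2 fun U hU _ => ?_⟩
  obtain ⟨n, hn⟩ := mem_iUnion.1 (mem_iInter₂.1 hx U hU)
  exact ⟨f^[n] x, hn, n, rfl⟩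

theorem dense_iUnion_preimage_iterate_of_rightInverse {X F : Type*} [AddCommMonoid X]
    [TopologicalSpace X] [ContinuousAdd X] [FunLike F X X] [AddMonoidHomClass F X X] (T : F)
    {S : X → X} (hTS : Function.RightInverse S T)
    (hS : ∀ y, Tendsto (fun n => S^[n] y) atTop (𝓝 0))
    {D : Set X} (hD : Dense D) (hTD : ∀ u ∈ D, ∀ᶠ n in atTop, T^[n] u = 0)
    {U : Set X} (hU : U.Nonempty) : Dense (⋃ n, (⇑T)^[n] ⁻¹' U) := by
  obtain ⟨y, hy⟩ := hU
  refine dense_closure.1 (hD.mono fun u hu => ?_)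
  have hlim : Tendsto (fun n => u + S^[n] y) atTop (𝓝 u) := by
    simpa using tendsto_const_nhds.add (hS y)
  refine mem_closure_of_tendsto hlim ((hTD u hu).mono fun n hn => mem_iUnion.2 ⟨n, ?_⟩)
  rw [mem_preimage, iterate_map_add, hn, hTS.iterate n y, zero_add]
  exact hy

theorem tendsto_iterate_nhds_zero_of_norm_le {E : Type*} [SeminormedAddCommGroup E]
    {S : E → E} {c : ℝ} (hc₀ : 0 ≤ c) (hc₁ : c < 1) (hS : ∀ x, ‖S x‖ ≤ c * ‖x‖) (x : E) :
    Tendsto (fun n => S^[n] x) atTop (𝓝 0) := by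
  have hle : ∀ n, ‖S^[n] x‖ ≤ c ^ n * ‖x‖ := by
    intro n
    induction n with
    | zero => simp
    | succ n ih =>
      rw [Function.iterate_succ_apply', pow_succ', mul_assoc]
      exact (hS _).trans (mul_le_mul_of_nonneg_left ih hc₀)
  refine squeeze_zero_norm hle ?_
  simpa using (tendsto_pow_atTop_nhds_zero_of_lt_one hc₀ hc₁).mul_const ‖x‖

namespace lp

variable {E : Type*} [NormedAddCommGroup E] {p : ENNReal}

def rightShiftFun (f : ℕ → E) : ℕ → E
  | 0 => 0
  | n + 1 => f n

theorem memℓp_rightShiftFun (hp : 0 < p.toReal) {f : ℕ → E} (hf : Memℓp f p) :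
    Memℓp (rightShiftFun f) p :=
  (memℓp_gen_iff hp).2 <| (summable_nat_add_iff 1).1 <| (memℓp_gen_iff hp).1 hf

def rightShift (hp : 0 < p.toReal) (f : lp (fun _ : ℕ => E) p) : lp (fun _ : ℕ => E) p :=
  ⟨rightShiftFun f, memℓp_rightShiftFun hp f.2⟩

theorem norm_rightShift [Fact (1 ≤ p)] (hp : 0 < p.toReal) (f : lp (fun _ : ℕ => E) p) :
    ‖rightShift hp f‖ = ‖f‖ := by
  rw [norm_eq_tsum_rpow hp, norm_eq_tsum_rpow hp,
    ((lp.memℓp (rightShift hp f)).summable hp).tsum_eq_zero_add]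
  simp [rightShift, rightShiftFun, Real.zero_rpow hp.ne']

theorem separableSpace_of_ne_top {𝕜 ι : Type*} [NormedField 𝕜] [SeparableSpace 𝕜] [Countable ι]
    [Fact (1 ≤ p)] (hp : p ≠ ⊤) : SeparableSpace (lp (fun _ : ι => 𝕜) p) := by
  classical
  have hspan :=
    (countable_range fun i : ι => lp.single (E := fun _ => 𝕜) p i 1).isSeparable.span (R := 𝕜)
  refine isSeparable_univ_iff.1 (hspan.closure.mono fun f _ => ?_)
  refine mem_closure_of_tendsto (lp.hasSum_single hp f)
    (Eventually.of_forall fun s => Submodule.sum_mem _ fun i _ => ?_)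
  have hsingle : lp.single p i (f i) = f i • lp.single (E := fun _ => 𝕜) p i 1 := by
    rw [← lp.single_smul, smul_eq_mul, mul_one]
  rw [hsingle]
  exact Submodule.smul_mem _ _ (Submodule.subset_span ⟨i, rfl⟩)

theorem dense_setOf_eventually_eq_zero [Fact (1 ≤ p)] (hp : p ≠ ⊤) :
    Dense {f : lp (fun _ : ℕ => E) p | ∀ᶠ i in atTop, f i = 0} := fun f =>
  mem_closure_of_tendsto (lp.hasSum_single hp f).tendsto_sum_nat <|
    Eventually.of_forall fun N => eventually_atTop.2 ⟨N, fun i hi => by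
      rw [lp.coeFn_sum, Finset.sum_apply]
      refine Finset.sum_eq_zero fun j hj => ?_
      rw [lp.single_apply, Pi.single_eq_of_ne]
      exact (Finset.mem_range.1 hj).trans_le hi |>.ne'⟩

section BackwardShift

variable {B : lp (fun _ : ℕ => E) p → lp (fun _ : ℕ => E) p} (hB : ∀ g n, B g n = g (n + 1))
include hB

theorem iterate_apply_of_apply_eq_succ (k : ℕ) (g : lp (fun _ : ℕ => E) p) (i : ℕ) :
    B^[k] g i = g (i + k) := by
  induction k generalizing g with
  | zero => rfl
  | succ k ih => rw [Function.iterate_succ_apply, ih, hB, add_assoc]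

theorem eventually_iterate_eq_zero {u : lp (fun _ : ℕ => E) p} (hu : ∀ᶠ i in atTop, u i = 0) :
    ∀ᶠ k in atTop, B^[k] u = 0 := by
  obtain ⟨N, hN⟩ := eventually_atTop.1 hu
  refine eventually_atTop.2 ⟨N, fun k hk => lp.ext (funext fun i => ?_)⟩
  rw [iterate_apply_of_apply_eq_succ hB]
  exact hN _ (by omega)

theorem rightInverse_rightShift (hp : 0 < p.toReal) : Function.RightInverse (rightShift hp) B :=
  fun _ => lp.ext (funext fun n => hB _ n)

end BackwardShift

end lp

theorem stmt_14 (B : lp (fun _ : ℕ => ℂ) 2 →L[ℂ] lp (fun _ : ℕ => ℂ) 2)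
    (hB : ∀ (g : lp (fun _ : ℕ => ℂ) 2) (n : ℕ), (B g : ℕ → ℂ) n = g (n + 1)) :
    ∀ z : ℂ, 1 < ‖z‖ →
      ∃ f : lp (fun _ : ℕ => ℂ) 2,
        Dense (Set.range fun n : ℕ => ((z • B) ^ n) f) := by
  intro z hz
  have hz₀ : z ≠ 0 := norm_pos_iff.1 (one_pos.trans hz)
  have hp : 0 < (2 : ENNReal).toReal := by norm_num
  have := lp.separableSpace_of_ne_top (𝕜 := ℂ) (ι := ℕ) (p := 2) ENNReal.ofNat_ne_top
  have hS : Function.RightInverse (fun g => z⁻¹ • lp.rightShift hp g) (z • B) := fun g => by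
    simp [smul_smul, hz₀, lp.rightInverse_rightShift hB hp g]
  have hS_norm : ∀ g : lp (fun _ : ℕ => ℂ) 2, ‖z⁻¹ • lp.rightShift hp g‖ ≤ ‖z‖⁻¹ * ‖g‖ :=
    fun g => by simp [norm_smul, lp.norm_rightShift]
  simp only [FunLike.coe_pow_eq_iterate]
  refine exists_dense_orbit_of_dense_iUnion_preimage (z • B).continuous fun U _ hU =>
    dense_iUnion_preimage_iterate_of_rightInverse (z • B) hS
      (tendsto_iterate_nhds_zero_of_norm_le (by positivity) (inv_lt_one_of_one_lt₀ hz) hS_norm)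
      (lp.dense_setOf_eventually_eq_zero ENNReal.ofNat_ne_top) (fun u hu => ?_) hU
  filter_upwards [lp.eventually_iterate_eq_zero hB hu] with n hn
  rw [← FunLike.coe_pow_eq_iterate, smul_pow, smul_apply, FunLike.coe_pow_eq_iterate, hn,
    smul_zero]
end

section
/- There exist sequences (M_k)_{k≥20} of positive integers and (x_k)_{k≥20} of positive reals such that: (i) (M_k) is strictly increasing and M_{k+1} − M_k → ∞; (ii) (M_k x_k) is strictly increasing and M_{k+1} x_{k+1} − M_k x_k → ∞; (iii) for every s > 0, δ > 0 and K > 0, there exists k > K with |s − x_k| < δ/M_k. -/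
/-!
The pair `(M, x)` is produced by a sweep in stages `n = 1, 2, …`. During stage `n`, `x` climbs
from `1/n` past `n` in steps `1/(n M)` while `M` grows by `n²`; these steps form a series of
harmonic type, so every stage ends, and any `s ∈ [1/n, n)` is caught between two consecutive
values of `x`, within `1/(n M) ≤ δ/M` of the lower one. When `x` passes `n` it restarts at
`1/(n+1)`, and `M` jumps to `(n+1)(⌈M x⌉ + n²)`, which keeps `M x` growing. At every step of
stage `n` both `M` and `M x` gain at least `n`.
-/

open Filter Finset

lemma tendsto_sum_range_inv_add_mul_atTop {a b : ℝ} (ha : 0 ≤ a) (hb : 0 < b) :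
    Tendsto (fun i => ∑ l ∈ range i, (a + b * l)⁻¹) atTop atTop := by
  refine (not_summable_iff_tendsto_nat_atTop_of_nonneg fun l => by positivity).1 fun hsum => ?_
  have hab : 0 < a + b := by linarith
  have hle : ∀ l : ℕ, (a + b)⁻¹ * (l : ℝ)⁻¹ ≤ (a + b * l)⁻¹ := by
    intro l
    rcases Nat.eq_zero_or_pos l with rfl | hl
    · simp only [CharP.cast_eq_zero, inv_zero, mul_zero, add_zero]
      positivity
    · have : (1 : ℝ) ≤ l := by exact_mod_cast hl
      rw [← mul_inv]
      exact inv_anti₀ (by positivity) (by nlinarith)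
  exact Real.not_summable_natCast_inv <| (summable_mul_left_iff (inv_ne_zero hab.ne')).1 <|
    hsum.of_nonneg_of_le (fun l => by positivity) hle

lemma lt_succ_and_tendsto_sub_of_add_le {a n : ℕ → ℝ} (hpos : ∀ k, 0 < n k)
    (hn : Tendsto n atTop atTop) (h : ∀ k, a k + n k ≤ a (k + 1)) :
    (∀ k, a k < a (k + 1)) ∧ Tendsto (fun k => a (k + 1) - a k) atTop atTop :=
  ⟨fun k => by linarith [h k, hpos k], tendsto_atTop_mono (fun k => by linarith [h k]) hn⟩

structure SweepState where
  stage : ℕ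
  M : ℕ
  x : ℝ

namespace SweepState

noncomputable def next (s : SweepState) : SweepState :=
  if s.x < s.stage then ⟨s.stage, s.M + s.stage ^ 2, s.x + (s.stage * s.M : ℝ)⁻¹⟩
  else ⟨s.stage + 1, (s.stage + 1) * (⌈s.M * s.x⌉₊ + s.stage ^ 2), (s.stage + 1 : ℝ)⁻¹⟩

def Valid (s : SweepState) : Prop :=
  0 < s.stage ∧ 0 < s.M ∧ (s.stage : ℝ)⁻¹ ≤ s.x

variable {s : SweepState}

lemma next_of_lt (h : s.x < s.stage) :
    s.next = ⟨s.stage, s.M + s.stage ^ 2, s.x + (s.stage * s.M : ℝ)⁻¹⟩ := by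
  simp [next, h]

lemma next_of_le (h : (s.stage : ℝ) ≤ s.x) :
    s.next = ⟨s.stage + 1, (s.stage + 1) * (⌈s.M * s.x⌉₊ + s.stage ^ 2), (s.stage + 1 : ℝ)⁻¹⟩ := by
  simp [next, h.not_gt]

lemma stage_le_next (s : SweepState) : s.stage ≤ s.next.stage := by
  rcases lt_or_ge s.x s.stage with h | h
  · rw [next_of_lt h]
  · rw [next_of_le h]; exact Nat.le_succ _

lemma Valid.next (hs : s.Valid) : s.next.Valid := by
  obtain ⟨hn, hM, hx⟩ := hs
  rcases lt_or_ge s.x s.stage with h | h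
  · rw [next_of_lt h]
    exact ⟨hn, by positivity, hx.trans (le_add_of_nonneg_right (by positivity))⟩
  · rw [next_of_le h]
    exact ⟨by positivity, by positivity, by push_cast; rfl⟩

lemma M_add_stage_le_next (hs : s.Valid) : (s.M : ℝ) + s.stage ≤ s.next.M := by
  obtain ⟨hn, -, -⟩ := hs
  have hn : (1 : ℝ) ≤ s.stage := by exact_mod_cast hn
  rcases lt_or_ge s.x s.stage with h | h
  · rw [next_of_lt h]
    push_cast
    nlinarith
  · rw [next_of_le h]
    have hM : (s.M : ℝ) ≤ ⌈s.M * s.x⌉₊ :=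
      (le_mul_of_one_le_right (Nat.cast_nonneg _) (hn.trans h)).trans (Nat.le_ceil _)
    push_cast
    nlinarith

lemma M_mul_x_add_stage_le_next (hs : s.Valid) :
    s.M * s.x + s.stage ≤ s.next.M * s.next.x := by
  obtain ⟨hn, hM, hx⟩ := hs
  rcases lt_or_ge s.x s.stage with h | h
  · rw [next_of_lt h]
    have hnx : (s.stage : ℝ) ≤ s.stage ^ 2 * s.x := by
      calc (s.stage : ℝ) = s.stage ^ 2 * (s.stage : ℝ)⁻¹ := by field_simp
        _ ≤ s.stage ^ 2 * s.x := by gcongr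
    have hrest : (0 : ℝ) ≤ (s.M + s.stage ^ 2) * (s.stage * s.M : ℝ)⁻¹ := by positivity
    push_cast
    linarith [show ((s.M : ℝ) + s.stage ^ 2) * (s.x + (s.stage * s.M : ℝ)⁻¹)
      = s.M * s.x + s.stage ^ 2 * s.x + (s.M + s.stage ^ 2) * (s.stage * s.M : ℝ)⁻¹ by ring]
  · rw [next_of_le h]
    have hceil := Nat.le_ceil ((s.M : ℝ) * s.x)
    have hsq : (s.stage : ℝ) ≤ s.stage ^ 2 := by
      nlinarith [show (1 : ℝ) ≤ s.stage by exact_mod_cast hn]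
    push_cast
    rw [mul_comm (_ + 1 : ℝ), mul_assoc, mul_inv_cancel₀ (by positivity), mul_one]
    linarith

end SweepState

open SweepState

noncomputable def sweep : ℕ → SweepState
  | 0 => ⟨1, 1, 1⟩
  | k + 1 => (sweep k).next

lemma sweep_valid (k : ℕ) : (sweep k).Valid := by
  induction k with
  | zero => exact ⟨one_pos, one_pos, by norm_num [sweep]⟩
  | succ k ih => exact ih.next

lemma sweep_stage_monotone : Monotone fun k => (sweep k).stage :=
  monotone_nat_of_le_succ fun k => stage_le_next (sweep k)

lemma not_forall_sweep_x_lt_stage (k : ℕ) : ¬ ∀ i, (sweep (k + i)).x < (sweep k).stage := by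
  intro h
  set n := (sweep k).stage
  set M := (sweep k).M
  have hrun : ∀ i, (sweep (k + i)).stage = n ∧ (sweep (k + i)).M = M + n ^ 2 * i ∧
      (sweep (k + i)).x = (sweep k).x + ∑ l ∈ range i, ((n * M : ℝ) + n ^ 3 * l)⁻¹ := by
    intro i
    induction i with
    | zero => simp [n, M]
    | succ i ih =>
      obtain ⟨hn, hM, hx⟩ := ih
      rw [← add_assoc, sweep, next_of_lt (hn ▸ h i), hn, hM, hx, sum_range_succ]
      refine ⟨rfl, by ring, ?_⟩
      dsimp only
      push_cast
      ring
  obtain ⟨hn, hM, -⟩ := sweep_valid k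
  have hdiv := tendsto_atTop_add_const_left _ (sweep k).x
    (tendsto_sum_range_inv_add_mul_atTop (a := n * M) (b := n ^ 3) (by positivity) (by positivity))
  obtain ⟨i, hi⟩ := (hdiv.eventually_ge_atTop (n : ℝ)).exists
  exact (h i).not_ge ((hrun i).2.2 ▸ hi)

lemma exists_sweep_x_le_lt {k : ℕ} {s : ℝ} (hxs : (sweep k).x ≤ s) (hs : s < (sweep k).stage) :
    ∃ j, k ≤ j ∧ (sweep j).stage = (sweep k).stage ∧ (sweep j).x ≤ s ∧
      s < (sweep j).x + ((sweep j).stage * (sweep j).M : ℝ)⁻¹ := by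
  by_contra! H
  have hrun : ∀ i, (sweep (k + i)).stage = (sweep k).stage ∧ (sweep (k + i)).x ≤ s := by
    intro i
    induction i with
    | zero => exact ⟨rfl, hxs⟩
    | succ i ih =>
      obtain ⟨hn, hx⟩ := ih
      rw [← add_assoc, sweep, next_of_lt (hx.trans_lt (hn ▸ hs))]
      exact ⟨hn, H _ (Nat.le_add_right k i) hn hx⟩
  exact not_forall_sweep_x_lt_stage k fun i => (hrun i).2.trans_lt hs

lemma frequently_sweep_stage_le_x : ∃ᶠ k in atTop, ((sweep k).stage : ℝ) ≤ (sweep k).x := by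
  refine frequently_atTop.2 fun k => ?_
  by_contra! H
  have hrun : ∀ i, (sweep (k + i)).stage = (sweep k).stage := by
    intro i
    induction i with
    | zero => rfl
    | succ i ih => rw [← add_assoc, sweep, next_of_lt (H _ (Nat.le_add_right k i)), ih]
  exact not_forall_sweep_x_lt_stage k fun i => hrun i ▸ H _ (Nat.le_add_right k i)

lemma tendsto_sweep_stage : Tendsto (fun k => (sweep k).stage) atTop atTop := by
  refine tendsto_atTop_atTop_of_monotone sweep_stage_monotone fun N => ?_
  induction N with
  | zero => exact ⟨0, Nat.zero_le _⟩
  | succ N ih =>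
    obtain ⟨k, hk⟩ := ih
    obtain ⟨j, hkj, hj⟩ := frequently_atTop.1 frequently_sweep_stage_le_x k
    refine ⟨j + 1, ?_⟩
    rw [sweep, next_of_le hj]
    have := sweep_stage_monotone hkj
    dsimp only at this ⊢
    omega

lemma frequently_abs_sub_sweep_x_lt {s δ : ℝ} (hs : 0 < s) (hδ : 0 < δ) :
    ∃ᶠ k in atTop, |s - (sweep k).x| < δ / (sweep k).M := by
  have hstage := (tendsto_natCast_atTop_atTop (R := ℝ)).comp tendsto_sweep_stage
  have hlarge : ∀ᶠ k in atTop, s < (sweep k).stage ∧ ((sweep k).stage : ℝ)⁻¹ < min s δ :=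
    (hstage.eventually_gt_atTop s).and
      ((tendsto_inv_atTop_zero.comp hstage).eventually_lt_const (lt_min hs hδ))
  obtain ⟨k₀, hk₀⟩ := eventually_atTop.1 hlarge
  refine frequently_atTop.2 fun K => ?_
  obtain ⟨j, hj, hreset⟩ := frequently_atTop.1 frequently_sweep_stage_le_x (max K k₀)
  obtain ⟨hsn, hinv⟩ := hk₀ (j + 1) (by omega)
  have hfresh : (sweep (j + 1)).x = ((sweep (j + 1)).stage : ℝ)⁻¹ := by
    rw [sweep, next_of_le hreset]
    push_cast
    rfl
  obtain ⟨i, hji, hstage_eq, hxs, hsx⟩ :=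
    exists_sweep_x_le_lt (hfresh ▸ (hinv.trans_le (min_le_left _ _)).le) hsn
  refine ⟨i, by omega, ?_⟩
  have hM : (0 : ℝ) < (sweep i).M := by exact_mod_cast (sweep_valid i).2.1
  rw [abs_of_nonneg (sub_nonneg.2 hxs), div_eq_mul_inv]
  calc s - (sweep i).x < ((sweep i).stage * (sweep i).M : ℝ)⁻¹ := by linarith
    _ = ((sweep i).stage : ℝ)⁻¹ * ((sweep i).M : ℝ)⁻¹ := mul_inv _ _
    _ ≤ δ * ((sweep i).M : ℝ)⁻¹ := by
      gcongr
      rw [hstage_eq]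
      exact (hinv.trans_le (min_le_right _ _)).le

theorem stmt_15 :
    ∃ (M : ℕ → ℕ) (x : ℕ → ℝ),
      (∀ k, 20 ≤ k → 0 < M k ∧ 0 < x k) ∧
      (∀ k, 20 ≤ k → M k < M (k + 1)) ∧
      Filter.Tendsto (fun k => (M (k + 1) : ℝ) - M k) Filter.atTop Filter.atTop ∧
      (∀ k, 20 ≤ k → (M k : ℝ) * x k < (M (k + 1) : ℝ) * x (k + 1)) ∧
      Filter.Tendsto (fun k => (M (k + 1) : ℝ) * x (k + 1) - (M k : ℝ) * x k)
        Filter.atTop Filter.atTop ∧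
      (∀ s : ℝ, 0 < s → ∀ δ : ℝ, 0 < δ → ∀ K : ℕ,
        ∃ k, K < k ∧ 20 ≤ k ∧ |s - x k| < δ / M k) := by
  have hpos : ∀ k, (0 : ℝ) < (sweep k).stage := fun k => by exact_mod_cast (sweep_valid k).1
  have hstage := (tendsto_natCast_atTop_atTop (R := ℝ)).comp tendsto_sweep_stage
  obtain ⟨hM_lt, hM_gap⟩ := lt_succ_and_tendsto_sub_of_add_le hpos hstage
    fun k => M_add_stage_le_next (sweep_valid k)
  obtain ⟨hy_lt, hy_gap⟩ := lt_succ_and_tendsto_sub_of_add_le hpos hstage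
    fun k => M_mul_x_add_stage_le_next (sweep_valid k)
  refine ⟨fun k => (sweep k).M, fun k => (sweep k).x, fun k _ => ?_,
    fun k _ => by exact_mod_cast hM_lt k, hM_gap, fun k _ => hy_lt k, hy_gap,
    fun s hs δ hδ K => ?_⟩
  · obtain ⟨-, hM, hx⟩ := sweep_valid k
    exact ⟨hM, (inv_pos.2 (hpos k)).trans_le hx⟩
  · obtain ⟨k, ⟨hKk, h20⟩, hk⟩ := ((eventually_gt_atTop K).and (eventually_ge_atTop 20)).and_frequently
      (frequently_abs_sub_sweep_x_lt hs hδ) |>.exists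
    exact ⟨k, hKk, h20, hk⟩
end
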